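/- arXiv:2211.03670 — 2 statements merged into one kernel-verified Lean document; each statement's English description precedes it below -/
import Mathlib

section
/- Let γ be a simple closed strictly convex curve with 0 ∈ Ω_γ, defined in polar coordinates by r = Γ(φ) with Γ continuous and positive, and set r_γ(x) = ‖x‖ / Γ(φ(x)) where φ(x) is the angular coordinate of x. Then there exists a constant C > 0 such that for every x ∈ ℝ² and every t > 0, dist(x, tγ) ≥ C |r_γ(x) − t|. -/
open Matrix Real MeasureTheory
open scoped Pointwise

/-- The Euclidean plane. -/
abbrev E2 := EuclideanSpace ℝ (Fin 2)

/-- Action of a `2×2` matrix on the Euclidean plane. -/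
noncomputable def act (M : Matrix (Fin 2) (Fin 2) ℝ) (v : E2) : E2 := WithLp.toLp 2 (M.mulVec v)

/-- The vector `(a, b)` of the Euclidean plane. -/
noncomputable def v2 (a b : ℝ) : E2 := (WithLp.equiv 2 (Fin 2 → ℝ)).symm ![a, b]

/-- The unit vector with angle `θ`. -/
noncomputable def unitVec (θ : ℝ) : E2 := v2 (Real.cos θ) (Real.sin θ)

lemma norm_unitVec (θ : ℝ) : ‖unitVec θ‖ = 1 := by
  rw [EuclideanSpace.norm_eq]
  simp [Fin.sum_univ_two, unitVec, v2, Real.norm_eq_abs, sq_abs, Real.cos_sq_add_sin_sq]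

lemma polar (z : E2) : ∃ φ : ℝ, z = ‖z‖ • unitVec φ := by
  rcases eq_or_ne z 0 with rfl | hz
  · exact ⟨0, by simp⟩
  · set c : ℂ := ⟨z 0, z 1⟩ with hc
    have hc0 : c ≠ 0 := by
      intro h
      apply hz
      have h0 : z 0 = 0 := congrArg Complex.re h
      have h1 : z 1 = 0 := congrArg Complex.im h
      ext i; fin_cases i <;> simp [h0, h1]
    have habs : ‖z‖ = ‖c‖ := by
      rw [EuclideanSpace.norm_eq, Complex.norm_def, Complex.normSq_mk]
      simp [Fin.sum_univ_two, Real.norm_eq_abs, sq_abs, sq]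
    refine ⟨c.arg, ?_⟩
    have habs0 : (‖c‖ : ℝ) ≠ 0 := by simp [hc0]
    ext i
    fin_cases i
    · show z 0 = (‖z‖ • unitVec c.arg) 0
      have h : (‖z‖ • unitVec c.arg) 0 = ‖z‖ * Real.cos c.arg := rfl
      rw [h, habs, Complex.cos_arg hc0]
      field_simp
      rfl
    · show z 1 = (‖z‖ • unitVec c.arg) 1
      have h : (‖z‖ • unitVec c.arg) 1 = ‖z‖ * Real.sin c.arg := rfl
      rw [h, habs, Complex.sin_arg]
      field_simp
      rfl

lemma unitVec_inj_Gamma (Γ : ℝ → ℝ) (hper : ∀ φ, Γ (φ + 2 * π) = Γ φ)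
    {φ ψ : ℝ} (h : unitVec φ = unitVec ψ) : Γ φ = Γ ψ := by
  have hcos : Real.cos φ = Real.cos ψ := congrArg (fun v : E2 => v 0) h
  have hsin : Real.sin φ = Real.sin ψ := congrArg (fun v : E2 => v 1) h
  have hangle : (φ : Real.Angle) = (ψ : Real.Angle) := Real.Angle.cos_sin_inj hcos hsin
  obtain ⟨k, hk⟩ := Real.Angle.angle_eq_iff_two_pi_dvd_sub.1 hangle
  have hP : Function.Periodic Γ (2 * π) := hper
  have h2 := (hP.int_mul k) ψ
  have hφ : φ = ψ + (k : ℝ) * (2 * π) := by linarith [hk]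
  rw [hφ]; exact h2

lemma le_infDist' {x : E2} {s : Set E2} (hs : s.Nonempty) {b : ℝ} (hb : 0 ≤ b)
    (h : ∀ y ∈ s, b ≤ dist x y) : b ≤ Metric.infDist x s := by
  have h1 : ENNReal.ofReal b ≤ EMetric.infEdist x s :=
    EMetric.le_infEdist.2 fun y hy => by
      rw [edist_dist]; exact ENNReal.ofReal_le_ofReal (h y hy)
  calc b = (ENNReal.ofReal b).toReal := (ENNReal.toReal_ofReal hb).symm
    _ ≤ (EMetric.infEdist x s).toReal := ENNReal.toReal_mono (Metric.infEdist_ne_top hs) h1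
    _ = Metric.infDist x s := rfl

/-- if `γ` is given in polar coordinates by `r = Γ(φ)` and
`r_γ(x) = ‖x‖/Γ(φ(x))`, then there is `C > 0` with
`dist(x, tγ) ≥ C |r_γ(x) − t|` for all `x` and all `t > 0`. -/
theorem stmt9
    (Γ : ℝ → ℝ) (hΓc : Continuous Γ) (hΓp : ∀ φ, 0 < Γ φ)
    (hper : ∀ φ, Γ (φ + 2 * π) = Γ φ)
    (γ : Set E2) (hγ : γ = Set.range fun φ => Γ φ • unitVec φ)
    (hconv : Convex ℝ {x : E2 | ∃ φ r : ℝ, 0 ≤ r ∧ r ≤ Γ φ ∧ x = r • unitVec φ}) :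
    ∃ C : ℝ, 0 < C ∧ ∀ t : ℝ, 0 < t → ∀ x : E2, ∀ φ : ℝ,
      x = ‖x‖ • unitVec φ → C * |‖x‖ / Γ φ - t| ≤ Metric.infDist x (t • γ) := by
  set s : Set E2 := {x : E2 | ∃ φ r : ℝ, 0 ≤ r ∧ r ≤ Γ φ ∧ x = r • unitVec φ} with hs
  -- minimum of Γ
  obtain ⟨φ₀, hφ₀mem, hmin⟩ := (isCompact_Icc : IsCompact (Set.Icc (0:ℝ) (2*π))).exists_isMinOn
    ⟨0, by constructor <;> [rfl; positivity]⟩ hΓc.continuousOn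
  set m : ℝ := Γ φ₀ with hm
  have hm0 : 0 < m := hΓp φ₀
  have hmle : ∀ φ, m ≤ Γ φ := by
    intro φ
    have h2π : (0:ℝ) < 2*π := by positivity
    set k : ℤ := ⌊φ / (2*π)⌋ with hk
    have h1 : 0 ≤ φ - k * (2*π) := Int.sub_floor_div_mul_nonneg φ h2π
    have h2 : φ - k * (2*π) < 2*π := Int.sub_floor_div_mul_lt φ h2π
    have hP : Function.Periodic Γ (2 * π) := hper
    have hΓeq : Γ (φ - k * (2*π)) = Γ φ := hP.sub_int_mul_eq k
    calc m ≤ Γ (φ - k * (2*π)) := hmin ⟨h1, le_of_lt h2⟩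
      _ = Γ φ := hΓeq
  -- ball of radius m is inside s
  have hball : Metric.ball (0:E2) m ⊆ s := by
    intro z hz
    obtain ⟨φ, hφ⟩ := polar z
    refine ⟨φ, ‖z‖, norm_nonneg z, ?_, hφ⟩
    have : ‖z‖ < m := by simpa [Metric.mem_ball, dist_zero_right] using hz
    exact le_trans this.le (hmle φ)
  have habs : Absorbent ℝ s :=
    absorbent_nhds_zero (Filter.mem_of_superset (Metric.ball_mem_nhds 0 hm0) hball)
  -- gauge formula
  have hgauge : ∀ c : ℝ, 0 ≤ c → ∀ φ : ℝ, gauge s (c • unitVec φ) = c / Γ φ := by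
    intro c hc φ
    rcases eq_or_lt_of_le hc with rfl | hc0
    · simp [gauge_zero]
    · have hΓφ := hΓp φ
      have hpos : 0 < c / Γ φ := div_pos hc0 hΓφ
      have hset : {r : ℝ | 0 < r ∧ c • unitVec φ ∈ r • s} = Set.Ici (c / Γ φ) := by
        ext r
        simp only [Set.mem_setOf_eq, Set.mem_Ici]
        constructor
        · rintro ⟨hr, hmem⟩
          obtain ⟨y, ⟨ψ, r', hr'0, hr'le, rfl⟩, hy⟩ := Set.mem_smul_set.1 hmem
          -- hy : r • (r' • unitVec ψ) = c • unitVec φ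
          have hy' : c • unitVec φ = (r * r') • unitVec ψ := by
            rw [← hy, smul_smul]
          have hnorm : c = r * r' := by
            have h := congrArg norm hy'
            rw [norm_smul, norm_smul, norm_unitVec, norm_unitVec] at h
            simp only [Real.norm_eq_abs, mul_one] at h
            rw [abs_of_pos hc0, abs_of_nonneg (mul_nonneg hr.le hr'0)] at h
            exact h
          have hr'pos : 0 < r' := by
            rcases lt_or_eq_of_le hr'0 with h | h
            · exact h
            · exfalso; rw [← h, mul_zero] at hnorm; linarith
          have huv : unitVec φ = unitVec ψ := by
            apply smul_right_injective E2 (ne_of_gt hc0)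
            show c • unitVec φ = c • unitVec ψ
            rw [hy', hnorm]
          have hΓeq : Γ φ = Γ ψ := unitVec_inj_Gamma Γ hper huv
          rw [div_le_iff₀ hΓφ, hnorm, hΓeq]
          calc r * r' ≤ r * Γ ψ := mul_le_mul_of_nonneg_left hr'le hr.le
            _ ≤ r * Γ ψ := le_refl _
        · intro hle
          have hr : 0 < r := lt_of_lt_of_le hpos hle
          refine ⟨hr, Set.mem_smul_set.2 ⟨(c/r) • unitVec φ, ⟨φ, c/r, by positivity, ?_, rfl⟩, ?_⟩⟩
          · rw [div_le_iff₀ hr]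
            have h := (div_le_iff₀ hΓφ).1 hle
            calc c ≤ r * Γ φ := h
              _ = Γ φ * r := mul_comm _ _
          · rw [smul_smul]
            congr 1
            field_simp
      rw [gauge, hset, csInf_Ici]
  -- gauge is controlled by the norm
  have hgauge_le : ∀ z : E2, gauge s z ≤ ‖z‖ / m := by
    intro z
    have h1 : gauge s z ≤ gauge (Metric.ball (0:E2) m) z :=
      gauge_mono (absorbent_ball_zero hm0) hball z
    rwa [gauge_ball hm0.le] at h1
  refine ⟨m, hm0, ?_⟩
  intro t ht x φ hx
  have hne : (t • γ).Nonempty := by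
    rw [hγ]; exact ⟨t • (Γ 0 • unitVec 0), Set.smul_mem_smul_set ⟨0, rfl⟩⟩
  apply le_infDist' hne (by positivity)
  rintro y hy
  rw [hγ] at hy
  obtain ⟨y', ⟨ψ, rfl⟩, rfl⟩ := hy
  have hgy : gauge s (t • (Γ ψ • unitVec ψ)) = t := by
    rw [smul_smul, hgauge (t * Γ ψ) (mul_pos ht (hΓp ψ)).le ψ,
      mul_div_assoc, div_self (ne_of_gt (hΓp ψ)), mul_one]
  have hgx : gauge s x = ‖x‖ / Γ φ := by
    conv_lhs => rw [hx]
    exact hgauge ‖x‖ (norm_nonneg x) φ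
  set y := t • (Γ ψ • unitVec ψ) with hydef
  have h1 : gauge s x ≤ gauge s y + gauge s (x - y) := by
    have := gauge_add_le hconv habs y (x - y)
    simpa using this
  have h2 : gauge s y ≤ gauge s x + gauge s (y - x) := by
    have := gauge_add_le hconv habs x (y - x)
    simpa using this
  have h3 : gauge s (x - y) ≤ ‖x - y‖ / m := hgauge_le _
  have h4 : gauge s (y - x) ≤ ‖x - y‖ / m := by
    have := hgauge_le (y - x); rwa [norm_sub_rev] at this
  have habs_le : |gauge s x - gauge s y| ≤ ‖x - y‖ / m := by
    rw [abs_sub_le_iff]; constructor <;> linarith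
  rw [hgx, hgy] at habs_le
  rw [dist_eq_norm]
  calc m * |‖x‖ / Γ φ - t| ≤ m * (‖x - y‖ / m) :=
        mul_le_mul_of_nonneg_left habs_le hm0.le
    _ = ‖x - y‖ := by field_simp
end

section
/- Fix A > 1 and c > 0, and let h : [0, 2π] → ℝ be continuous with h(θ) ≥ c for all θ. Then there is a constant C > 0 (independent of A and t) such that for all t ≥ 1 and all θ, |∫_A^∞ cos(2πtrh(θ) − 3π/4) e^{−(2π)² r²/t²} r^{−1/2} dr| ≤ C/t. -/
open Real MeasureTheory
open Set Filter

set_option maxHeartbeats 1000000 in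
lemma aux_ibp (b ω A : ℝ) (hb : 0 < b) (hω : 0 < ω) (hA : 1 < A) :
    |∫ r in Set.Ioi A,
        Real.cos (ω * r - 3 * π / 4) * Real.exp (-b * r ^ 2) * r ^ (-(1 / 2) : ℝ)| ≤ 2 / ω := by
  set p : ℝ := -(1/2) with hp
  set g : ℝ → ℝ := fun r => Real.exp (-b * r ^ 2) * r ^ p with hgdef
  set φ : ℝ → ℝ := fun r =>
    Real.exp (-b * r ^ 2) * (-b * (2 * r)) * r ^ p
      + Real.exp (-b * r ^ 2) * (p * r ^ (p - 1)) with hφdef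
  set F : ℝ → ℝ := fun r => Real.sin (ω * r - 3 * π / 4) / ω * g r with hFdef
  clear_value p g φ F
  -- derivative of g
  have hg : ∀ r : ℝ, 0 < r → HasDerivAt g (φ r) r := by
    intro r hr
    have h1 : HasDerivAt (fun r : ℝ => -b * r ^ 2) (-b * (2 * r)) r := by
      simpa using (hasDerivAt_pow 2 r).const_mul (-b)
    have he : HasDerivAt (fun r : ℝ => Real.exp (-b * r ^ 2))
        (Real.exp (-b * r ^ 2) * (-b * (2 * r))) r := h1.exp
    have hrp : HasDerivAt (fun r : ℝ => r ^ p) (p * r ^ (p - 1)) r :=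
      Real.hasDerivAt_rpow_const (Or.inl hr.ne')
    simpa [hgdef, hφdef, neg_mul, Pi.mul_def] using he.mul hrp
  -- derivative of F
  have hF : ∀ r : ℝ, 0 < r →
      HasDerivAt F (Real.cos (ω * r - 3 * π / 4) * g r
        + Real.sin (ω * r - 3 * π / 4) / ω * φ r) r := by
    intro r hr
    have hlin : HasDerivAt (fun r : ℝ => ω * r - 3 * π / 4) ω r := by
      simpa using ((hasDerivAt_id r).const_mul ω).sub_const (3 * π / 4)
    have hs : HasDerivAt (fun r : ℝ => Real.sin (ω * r - 3 * π / 4))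
        (Real.cos (ω * r - 3 * π / 4) * ω) r := hlin.sin
    have hsd := (hs.div_const ω).mul (hg r hr)
    have : Real.cos (ω * r - 3 * π / 4) * ω / ω = Real.cos (ω * r - 3 * π / 4) := by
      field_simp
    simpa [hFdef, this, Pi.mul_def] using hsd
  have hp_le : ∀ r : ℝ, 1 ≤ r → r ^ p ≤ 1 := fun r hr =>
    Real.rpow_le_one_of_one_le_of_nonpos hr (by norm_num [hp])
  have hp1_le : ∀ r : ℝ, 1 ≤ r → r ^ (p - 1) ≤ 1 := fun r hr =>
    Real.rpow_le_one_of_one_le_of_nonpos hr (by norm_num [hp])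
  -- continuity helpers
  have hmg : ContinuousOn (fun r : ℝ => r ^ p) (Set.Ioi A) := fun x hx =>
    (Real.continuousAt_rpow_const x p
      (Or.inl (by have := hx.out; linarith : (0:ℝ) < x).ne')).continuousWithinAt
  have hmg1 : ContinuousOn (fun r : ℝ => r ^ (p - 1)) (Set.Ioi A) := fun x hx =>
    (Real.continuousAt_rpow_const x (p - 1)
      (Or.inl (by have := hx.out; linarith : (0:ℝ) < x).ne')).continuousWithinAt
  have hce : Continuous fun r : ℝ => Real.exp (-b * r ^ 2) := by fun_prop
  have hφcont : ContinuousOn φ (Set.Ioi A) := by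
    rw [hφdef]
    apply ContinuousOn.add
    · exact (hce.continuousOn.mul (by fun_prop)).mul hmg
    · exact hce.continuousOn.mul (continuousOn_const.mul hmg1)
  -- integrability of φ
  have intφ : IntegrableOn φ (Set.Ioi A) := by
    have intM : Integrable (fun r : ℝ => 2 * b * (r * Real.exp (-b * r ^ 2))
        + Real.exp (-b * r ^ 2)) := by
      exact ((integrable_mul_exp_neg_mul_sq hb).const_mul (2 * b)).add
        (integrable_exp_neg_mul_sq hb)
    refine Integrable.mono' intM.integrableOn
      (hφcont.aestronglyMeasurable measurableSet_Ioi) ?_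
    filter_upwards [ae_restrict_mem measurableSet_Ioi] with r hr
    have hr1 : (1 : ℝ) ≤ r := le_of_lt (lt_trans hA hr.out)
    have hr0 : (0 : ℝ) < r := by linarith
    have e0 : (0 : ℝ) < Real.exp (-b * r ^ 2) := Real.exp_pos _
    have rp0 : (0 : ℝ) < r ^ p := Real.rpow_pos_of_pos hr0 p
    have rp10 : (0 : ℝ) < r ^ (p - 1) := Real.rpow_pos_of_pos hr0 (p - 1)
    have pos1 : (0 : ℝ) < Real.exp (-b * r ^ 2) * (b * (2 * r)) * r ^ p :=
      mul_pos (mul_pos e0 (by positivity)) rp0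
    have pos2 : (0 : ℝ) < Real.exp (-b * r ^ 2) * ((1/2) * r ^ (p - 1)) :=
      mul_pos e0 (by positivity)
    have b1 : Real.exp (-b * r ^ 2) * (b * (2 * r)) * r ^ p
        ≤ 2 * b * (r * Real.exp (-b * r ^ 2)) := by
      have := hp_le r hr1
      nlinarith [mul_pos (mul_pos e0 hb) hr0]
    have b2 : Real.exp (-b * r ^ 2) * ((1/2) * r ^ (p - 1)) ≤ Real.exp (-b * r ^ 2) := by
      have h := mul_le_mul_of_nonneg_left (hp1_le r hr1) e0.le
      have hrw : Real.exp (-b * r ^ 2) * ((1/2) * r ^ (p - 1))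
          = (1/2) * (Real.exp (-b * r ^ 2) * r ^ (p - 1)) := by ring
      rw [mul_one] at h
      rw [hrw]; linarith
    have hφr : φ r = -(Real.exp (-b * r ^ 2) * (b * (2 * r)) * r ^ p)
        - Real.exp (-b * r ^ 2) * ((1/2) * r ^ (p - 1)) := by
      simp only [hφdef, hp]; ring
    rw [Real.norm_eq_abs, hφr, abs_of_nonpos (by linarith), neg_sub]
    linarith
  -- φ is nonpositive on Ioi A
  have hφ_nonpos : ∀ r ∈ Set.Ioi A, φ r ≤ 0 := by
    intro r hr
    have hr0 : (0 : ℝ) < r := by have := hr.out; linarith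
    have e0 : (0 : ℝ) < Real.exp (-b * r ^ 2) := Real.exp_pos _
    have rp0 : (0 : ℝ) < r ^ p := Real.rpow_pos_of_pos hr0 p
    have rp10 : (0 : ℝ) < r ^ (p - 1) := Real.rpow_pos_of_pos hr0 (p - 1)
    have pos1 : (0 : ℝ) < Real.exp (-b * r ^ 2) * (b * (2 * r)) * r ^ p :=
      mul_pos (mul_pos e0 (by positivity)) rp0
    have pos2 : (0 : ℝ) < Real.exp (-b * r ^ 2) * ((1/2) * r ^ (p - 1)) :=
      mul_pos e0 (by positivity)
    have hφr : φ r = -(Real.exp (-b * r ^ 2) * (b * (2 * r)) * r ^ p)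
        - Real.exp (-b * r ^ 2) * ((1/2) * r ^ (p - 1)) := by
      simp only [hφdef, hp]; ring
    rw [hφr]; linarith
  -- integrability of the main integrand
  have intf : IntegrableOn
      (fun r => Real.cos (ω * r - 3 * π / 4) * Real.exp (-b * r ^ 2) * r ^ p)
      (Set.Ioi A) := by
    refine Integrable.mono' (integrable_exp_neg_mul_sq hb).integrableOn
      ((((Real.continuous_cos.comp (by fun_prop)).continuousOn.mul
        hce.continuousOn).mul hmg).aestronglyMeasurable measurableSet_Ioi) ?_
    filter_upwards [ae_restrict_mem measurableSet_Ioi] with r hr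
    have hr1 : (1 : ℝ) ≤ r := le_of_lt (lt_trans hA hr.out)
    have hr0 : (0 : ℝ) < r := by linarith
    have e0 : (0 : ℝ) < Real.exp (-b * r ^ 2) := Real.exp_pos _
    rw [Real.norm_eq_abs, abs_mul, abs_mul]
    have h1 : |Real.cos (ω * r - 3 * π / 4)| ≤ 1 := Real.abs_cos_le_one _
    have h2 : |r ^ p| ≤ 1 := by
      rw [abs_of_pos (Real.rpow_pos_of_pos hr0 p)]; exact hp_le r hr1
    rw [abs_of_pos e0]
    calc |Real.cos (ω * r - 3 * π / 4)| * Real.exp (-b * r ^ 2) * |r ^ p|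
        ≤ 1 * Real.exp (-b * r ^ 2) * 1 := by
          gcongr <;> first | exact h1 | exact h2 | positivity
      _ = Real.exp (-b * r ^ 2) := by ring
  -- integrability of sin/ω * φ
  have intsφ : IntegrableOn (fun r => Real.sin (ω * r - 3 * π / 4) / ω * φ r)
      (Set.Ioi A) := by
    refine Integrable.mono' ((intφ.norm).const_mul (1/ω))
      ((((Real.continuous_sin.comp (by fun_prop)).continuousOn.div_const ω).mul
        hφcont).aestronglyMeasurable measurableSet_Ioi) ?_
    filter_upwards [] with r
    rw [Real.norm_eq_abs, abs_mul, abs_div, abs_of_pos hω]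
    have h1 : |Real.sin (ω * r - 3 * π / 4)| ≤ 1 := Real.abs_sin_le_one _
    calc |Real.sin (ω * r - 3 * π / 4)| / ω * |φ r| ≤ 1 / ω * |φ r| := by
          apply mul_le_mul_of_nonneg_right _ (abs_nonneg _)
          gcongr
      _ = 1 / ω * ‖φ r‖ := by rw [Real.norm_eq_abs]
  -- limits at infinity
  have tend_sq : Tendsto (fun r : ℝ => Real.exp (-b * r ^ 2)) atTop (nhds 0) := by
    have h1 : Tendsto (fun r : ℝ => b * r ^ 2) atTop atTop :=
      (tendsto_pow_atTop two_ne_zero).const_mul_atTop hb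
    have h2 : Tendsto (fun r : ℝ => -b * r ^ 2) atTop atBot := by
      simp only [neg_mul]
      exact tendsto_neg_atBot_iff.mpr h1
    exact Real.tendsto_exp_atBot.comp h2
  have gbound : ∀ᶠ r in atTop, ‖g r‖ ≤ Real.exp (-b * r ^ 2) := by
    filter_upwards [eventually_ge_atTop (1 : ℝ)] with r hr
    have hr0 : (0 : ℝ) < r := by linarith
    rw [hgdef]
    have e0 : (0 : ℝ) < Real.exp (-b * r ^ 2) := Real.exp_pos _
    have rp0 : (0 : ℝ) < r ^ p := Real.rpow_pos_of_pos hr0 p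
    rw [Real.norm_eq_abs, abs_of_pos (mul_pos e0 rp0)]
    have := hp_le r hr
    nlinarith
  have tendg : Tendsto g atTop (nhds 0) := squeeze_zero_norm' gbound tend_sq
  have tendF : Tendsto F atTop (nhds 0) := by
    have tconst : Tendsto (fun r : ℝ => 1 / ω * Real.exp (-b * r ^ 2)) atTop (nhds 0) := by
      have := tend_sq.const_mul (1/ω)
      rwa [mul_zero] at this
    refine squeeze_zero_norm' ?_ tconst
    filter_upwards [gbound] with r hr
    rw [hFdef]
    rw [Real.norm_eq_abs, abs_mul, abs_div, abs_of_pos hω]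
    calc |Real.sin (ω * r - 3 * π / 4)| / ω * |g r| ≤ 1 / ω * |g r| := by
          apply mul_le_mul_of_nonneg_right _ (abs_nonneg _)
          gcongr
          exact Real.abs_sin_le_one _
      _ ≤ 1 / ω * Real.exp (-b * r ^ 2) := by
          apply mul_le_mul_of_nonneg_left _ (by positivity)
          rw [← Real.norm_eq_abs]; exact hr
  -- the two improper integral identities
  have eqφ : ∫ r in Set.Ioi A, φ r = 0 - g A := by
    refine integral_Ioi_of_hasDerivAt_of_tendsto' (fun r hr => hg r ?_) intφ tendg
    have := hr.out; linarith
  have intcg : IntegrableOn (fun r => Real.cos (ω * r - 3 * π / 4) * g r) (Set.Ioi A) := by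
    simp only [hgdef, ← mul_assoc]; exact intf
  have eqF : ∫ r in Set.Ioi A,
      (Real.cos (ω * r - 3 * π / 4) * g r + Real.sin (ω * r - 3 * π / 4) / ω * φ r)
      = 0 - F A := by
    refine integral_Ioi_of_hasDerivAt_of_tendsto' (fun r hr => hF r ?_) (intcg.add intsφ) tendF
    have := hr.out; linarith
  have eqsum : ∫ r in Set.Ioi A,
      (Real.cos (ω * r - 3 * π / 4) * g r + Real.sin (ω * r - 3 * π / 4) / ω * φ r)
      = (∫ r in Set.Ioi A, Real.cos (ω * r - 3 * π / 4) * g r)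
        + ∫ r in Set.Ioi A, Real.sin (ω * r - 3 * π / 4) / ω * φ r :=
    integral_add intcg intsφ
  have key : (∫ r in Set.Ioi A, Real.cos (ω * r - 3 * π / 4) * g r)
      = -F A - ∫ r in Set.Ioi A, Real.sin (ω * r - 3 * π / 4) / ω * φ r := by
    have := eqF
    rw [eqsum] at this
    linarith
  -- bounds on the pieces
  have hgA : g A = Real.exp (-b * A ^ 2) * A ^ p := by rw [hgdef]
  have hgA0 : (0 : ℝ) ≤ g A := by
    rw [hgA]
    exact mul_nonneg (Real.exp_pos _).le (Real.rpow_nonneg (by linarith) _)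
  have hgA1 : g A ≤ 1 := by
    rw [hgA]
    have h1 : Real.exp (-b * A ^ 2) ≤ 1 := Real.exp_le_one_iff.mpr (by nlinarith)
    have h2 : A ^ p ≤ 1 := hp_le A hA.le
    have h3 : (0 : ℝ) ≤ A ^ p := Real.rpow_nonneg (by linarith) _
    nlinarith [Real.exp_pos (-b * A ^ 2)]
  have hFA : |F A| ≤ 1 / ω * g A := by
    rw [hFdef, abs_mul, abs_div, abs_of_pos hω, abs_of_nonneg hgA0]
    apply mul_le_mul_of_nonneg_right _ hgA0
    gcongr
    exact Real.abs_sin_le_one _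
  have hint_normφ : ∫ r in Set.Ioi A, ‖φ r‖ = g A := by
    have h1 : ∫ r in Set.Ioi A, ‖φ r‖ = ∫ r in Set.Ioi A, -φ r := by
      refine setIntegral_congr_fun measurableSet_Ioi fun r hr => ?_
      rw [Real.norm_eq_abs, abs_of_nonpos (hφ_nonpos r hr)]
    rw [h1, integral_neg, eqφ]
    ring
  have hsφ : |∫ r in Set.Ioi A, Real.sin (ω * r - 3 * π / 4) / ω * φ r| ≤ 1 / ω * g A := by
    calc |∫ r in Set.Ioi A, Real.sin (ω * r - 3 * π / 4) / ω * φ r|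
        ≤ ∫ r in Set.Ioi A, ‖Real.sin (ω * r - 3 * π / 4) / ω * φ r‖ :=
          by rw [← Real.norm_eq_abs]; exact norm_integral_le_integral_norm _
      _ ≤ ∫ r in Set.Ioi A, 1 / ω * ‖φ r‖ := by
          refine integral_mono intsφ.norm ((intφ.norm).const_mul _) fun r => ?_
          rw [norm_mul]
          apply mul_le_mul_of_nonneg_right _ (norm_nonneg _)
          rw [norm_div, Real.norm_eq_abs, Real.norm_eq_abs, abs_of_pos hω]
          gcongr
          exact Real.abs_sin_le_one _
      _ = 1 / ω * ∫ r in Set.Ioi A, ‖φ r‖ := integral_const_mul _ _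
      _ = 1 / ω * g A := by rw [hint_normφ]
  -- conclusion
  have hrewrite : (fun r : ℝ => Real.cos (ω * r - 3 * π / 4) * Real.exp (-b * r ^ 2) * r ^ p)
      = fun r => Real.cos (ω * r - 3 * π / 4) * g r := by
    funext r; rw [hgdef]; ring
  rw [hrewrite, key]
  have h1ω : 1 / ω * g A ≤ 1 / ω := by
    have := mul_le_mul_of_nonneg_left hgA1 (le_of_lt (by positivity : (0:ℝ) < 1/ω))
    simpa using this
  calc |-F A - ∫ r in Set.Ioi A, Real.sin (ω * r - 3 * π / 4) / ω * φ r|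
      ≤ |F A| + |∫ r in Set.Ioi A, Real.sin (ω * r - 3 * π / 4) / ω * φ r| := by
        rw [show -F A - (∫ r in Set.Ioi A, Real.sin (ω * r - 3 * π / 4) / ω * φ r)
            = -(F A + ∫ r in Set.Ioi A, Real.sin (ω * r - 3 * π / 4) / ω * φ r) by ring,
          abs_neg]
        exact abs_add_le _ _
    _ ≤ 1 / ω * g A + 1 / ω * g A := add_le_add hFA hsφ
    _ ≤ 2 / ω := by
        have : (2 : ℝ) / ω = 1 / ω + 1 / ω := by ring
        rw [this]; linarith

/-- if `h` is continuous with `h ≥ c > 0` on `[0, 2π]`, then there is a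
constant `C > 0` (independent of `A` and `t`) such that for all `A > 1`, `t ≥ 1` and all
`θ ∈ [0, 2π]`,
`|∫_A^∞ cos(2πtrh(θ) − 3π/4) e^{−(2π)²r²/t²} r^{−1/2} dr| ≤ C/t`. -/
theorem stmt17
    (c : ℝ) (hc : 0 < c) (h : ℝ → ℝ) (hcont : Continuous h)
    (hlb : ∀ θ ∈ Set.Icc (0 : ℝ) (2 * π), c ≤ h θ) :
    ∃ C : ℝ, 0 < C ∧ ∀ A : ℝ, 1 < A → ∀ t : ℝ, 1 ≤ t → ∀ θ ∈ Set.Icc (0 : ℝ) (2 * π),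
      |∫ r in Set.Ioi A,
          Real.cos (2 * π * t * r * h θ - 3 * π / 4) *
            Real.exp (-(2 * π) ^ 2 * r ^ 2 / t ^ 2) * r ^ (-(1 / 2) : ℝ)| ≤ C / t := by
  have hπ : (0 : ℝ) < π := Real.pi_pos
  refine ⟨1 / (π * c), by positivity, ?_⟩
  intro A hA t ht θ hθ
  have ht0 : (0 : ℝ) < t := by linarith
  have hhθ : (0 : ℝ) < h θ := lt_of_lt_of_le hc (hlb θ hθ)
  have hω : (0 : ℝ) < 2 * π * t * h θ := by positivity
  have hb : (0 : ℝ) < (2 * π) ^ 2 / t ^ 2 := by positivity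
  have key := aux_ibp ((2 * π) ^ 2 / t ^ 2) (2 * π * t * h θ) A hb hω hA
  have hfun : ∀ r : ℝ,
      Real.cos (2 * π * t * r * h θ - 3 * π / 4) *
          Real.exp (-(2 * π) ^ 2 * r ^ 2 / t ^ 2) * r ^ (-(1 / 2) : ℝ)
        = Real.cos (2 * π * t * h θ * r - 3 * π / 4) *
            Real.exp (-((2 * π) ^ 2 / t ^ 2) * r ^ 2) * r ^ (-(1 / 2) : ℝ) := by
    intro r
    rw [show 2 * π * t * r * h θ - 3 * π / 4 = 2 * π * t * h θ * r - 3 * π / 4 by ring,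
      show -(2 * π) ^ 2 * r ^ 2 / t ^ 2 = -((2 * π) ^ 2 / t ^ 2) * r ^ 2 by ring]
  simp only [hfun]
  refine le_trans key ?_
  rw [div_div, div_le_div_iff₀ hω (by positivity)]
  have hcθ := hlb θ hθ
  nlinarith [mul_pos hπ ht0]
end
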